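/- arXiv:1106.3453 — 2 statements merged into one kernel-verified Lean document; each statement's English description precedes it below -/
import Mathlib

section
/- The locating chromatic number of K_3 □ K_4 equals 6, and the locating chromatic number of K_3 □ K_5 equals 6. -/
/-!
`K₃ □ Kₙ` has diameter two, so the color code of a vertex only records its own color and the
set of colors in its closed neighbourhood; in particular two colorful vertices of the same color
have the same code. The rows are `n`-cliques, so at least `n` colors are needed; with exactly `n`
colors every row is rainbow, every vertex is colorful, and the `3n` vertices would need `3n`
colors. For `K₃ □ K₄` with five colors each row misses exactly one color. Two rows cannot miss
the same color, and then each row contains two colorful vertices, one below each occurrence of its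
missing color in the other rows: six colorful vertices, but only five colors. Locating
`6`-colorings of `K₃ □ K₄` and `K₃ □ K₅` are given explicitly.
-/

open SimpleGraph

/-- The distance from a vertex to a set of vertices. -/
noncomputable def setDist {V : Type*} (G : SimpleGraph V) (v : V) (S : Set V) : ℕ :=
  sInf (G.dist v '' S)

/-- The color code of a vertex with respect to a `k`-coloring `c`:
the tuple of distances to the color classes. -/
noncomputable def colorCode {V : Type*} (G : SimpleGraph V) {k : ℕ} (c : V → Fin k)
    (v : V) : Fin k → ℕ :=
  fun i => setDist G v (c ⁻¹' {i})

/-- `c` is a locating `k`-coloring of `G`: a proper coloring onto the `k` colors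
such that distinct vertices have distinct color codes. -/
def IsLocatingColoring {V : Type*} (G : SimpleGraph V) {k : ℕ} (c : V → Fin k) : Prop :=
  Function.Surjective c ∧
  (∀ u v : V, G.Adj u v → c u ≠ c v) ∧
  Function.Injective (colorCode G c)

/-- The locating chromatic number: the least `k` admitting a locating `k`-coloring. -/
noncomputable def locatingChromaticNumber {V : Type*} (G : SimpleGraph V) : ℕ :=
  sInf {k : ℕ | ∃ c : V → Fin k, IsLocatingColoring G c}

/-- A vertex is colorful w.r.t. a coloring `c` if every color appears in its
closed neighborhood. -/
def IsColorful {V : Type*} (G : SimpleGraph V) {k : ℕ} (c : V → Fin k) (v : V) : Prop :=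
  ∀ i : Fin k, ∃ u : V, (u = v ∨ G.Adj v u) ∧ c u = i

open Function

section ColorCode

variable {V : Type*} {G : SimpleGraph V} {k : ℕ} {c : V → Fin k}

def closedNbhdColors (G : SimpleGraph V) (c : V → Fin k) (v : V) : Set (Fin k) :=
  {i | ∃ u, (u = v ∨ G.Adj v u) ∧ c u = i}

instance [Fintype V] [DecidableEq V] [DecidableRel G.Adj] (v : V) (i : Fin k) :
    Decidable (i ∈ closedNbhdColors G c v) :=
  inferInstanceAs (Decidable (∃ _, _))

lemma isColorful_iff_closedNbhdColors_eq_univ {v : V} :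
    IsColorful G c v ↔ closedNbhdColors G c v = Set.univ := by
  simp [IsColorful, closedNbhdColors, Set.eq_univ_iff_forall]

lemma colorCode_le_iff (hc : Surjective c) {v : V} {i : Fin k} {d : ℕ} :
    colorCode G c v i ≤ d ↔ ∃ x, c x = i ∧ G.dist v x ≤ d := by
  unfold colorCode setDist
  obtain ⟨x₀, hx₀⟩ := hc i
  have hne : (G.dist v '' (c ⁻¹' {i})).Nonempty := ⟨_, x₀, hx₀, rfl⟩
  constructor
  · intro h
    obtain ⟨x, hx, hdx⟩ := Nat.sInf_mem hne
    exact ⟨x, hx, hdx.trans_le h⟩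
  · rintro ⟨x, hx, hdx⟩
    exact (Nat.sInf_le (Set.mem_image_of_mem (G.dist v) hx)).trans hdx

lemma colorCode_eq_zero_iff (hG : G.Connected) (hc : Surjective c) {v : V} {i : Fin k} :
    colorCode G c v i = 0 ↔ c v = i := by
  rw [← Nat.le_zero, colorCode_le_iff hc]
  simp [hG.dist_eq_zero_iff]

lemma colorCode_le_one_iff (hG : G.Connected) (hc : Surjective c) {v : V} {i : Fin k} :
    colorCode G c v i ≤ 1 ↔ i ∈ closedNbhdColors G c v := by
  rw [colorCode_le_iff hc]
  refine exists_congr fun x => ?_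
  rw [and_comm, Nat.le_one_iff_eq_zero_or_eq_one, hG.dist_eq_zero_iff, dist_eq_one_iff_adj, eq_comm]

lemma colorCode_le_two (hc : Surjective c) (hdiam : ∀ u v, G.dist u v ≤ 2) (v : V) (i : Fin k) :
    colorCode G c v i ≤ 2 :=
  let ⟨x, hx⟩ := hc i
  (colorCode_le_iff hc).2 ⟨x, hx, hdiam v x⟩

lemma colorCode_eq_colorCode_iff (hG : G.Connected) (hdiam : ∀ u v, G.dist u v ≤ 2)
    (hc : Surjective c) {u v : V} :
    colorCode G c u = colorCode G c v ↔
      c u = c v ∧ closedNbhdColors G c u = closedNbhdColors G c v := by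
  constructor
  · intro h
    refine ⟨?_, Set.ext fun i => ?_⟩
    · rw [← colorCode_eq_zero_iff hG hc, h, colorCode_eq_zero_iff hG hc]
    · rw [← colorCode_le_one_iff hG hc, h, colorCode_le_one_iff hG hc]
  · rintro ⟨hcol, hnbhd⟩
    funext i
    have h0 : colorCode G c u i = 0 ↔ colorCode G c v i = 0 := by
      rw [colorCode_eq_zero_iff hG hc, colorCode_eq_zero_iff hG hc, hcol]
    have h1 : colorCode G c u i ≤ 1 ↔ colorCode G c v i ≤ 1 := by
      rw [colorCode_le_one_iff hG hc, colorCode_le_one_iff hG hc, hnbhd]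
    have := colorCode_le_two hc hdiam u i
    have := colorCode_le_two hc hdiam v i
    omega

lemma isLocatingColoring_iff_of_dist_le_two (hG : G.Connected) (hdiam : ∀ u v, G.dist u v ≤ 2) :
    IsLocatingColoring G c ↔ Surjective c ∧ (∀ u v, G.Adj u v → c u ≠ c v) ∧
      ∀ u v, c u = c v → closedNbhdColors G c u = closedNbhdColors G c v → u = v := by
  refine ⟨fun ⟨hs, hp, hi⟩ => ⟨hs, hp, fun u v h₁ h₂ => ?_⟩,
    fun ⟨hs, hp, hi⟩ => ⟨hs, hp, ?_⟩⟩
  · exact hi ((colorCode_eq_colorCode_iff hG hdiam hs).2 ⟨h₁, h₂⟩)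
  · intro u v h
    obtain ⟨h₁, h₂⟩ := (colorCode_eq_colorCode_iff hG hdiam hs).1 h
    exact hi u v h₁ h₂

lemma IsLocatingColoring.eq_of_isColorful (hG : G.Connected) (hdiam : ∀ u v, G.dist u v ≤ 2)
    (hc : IsLocatingColoring G c) {u v : V} (hu : IsColorful G c u) (hv : IsColorful G c v)
    (h : c u = c v) : u = v := by
  rw [isColorful_iff_closedNbhdColors_eq_univ] at hu hv
  exact ((isLocatingColoring_iff_of_dist_le_two hG hdiam).1 hc).2.2 u v h (hu.trans hv.symm)

lemma locatingChromaticNumber_eq_of_isLocatingColoring {n : ℕ} (c : V → Fin n)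
    (hc : IsLocatingColoring G c)
    (hmin : ∀ k (c : V → Fin k), IsLocatingColoring G c → n ≤ k) :
    locatingChromaticNumber G = n :=
  le_antisymm (Nat.sInf_le ⟨c, hc⟩) (le_csInf ⟨n, c, hc⟩ fun k ⟨c, hc⟩ => hmin k c hc)

end ColorCode

section CompleteBoxProd

variable {α β : Type*} {k : ℕ} {c : α × β → Fin k}

lemma boxProd_top_adj {x y : α × β} :
    ((⊤ : SimpleGraph α) □ (⊤ : SimpleGraph β)).Adj x y ↔
      x.1 = y.1 ∧ x.2 ≠ y.2 ∨ x.2 = y.2 ∧ x.1 ≠ y.1 := by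
  simp only [boxProd_adj, top_adj]
  tauto

instance [DecidableEq α] [DecidableEq β] :
    DecidableRel ((⊤ : SimpleGraph α) □ (⊤ : SimpleGraph β)).Adj :=
  fun _ _ => decidable_of_iff' _ boxProd_top_adj

lemma connected_boxProd_top [Nonempty α] [Nonempty β] :
    ((⊤ : SimpleGraph α) □ (⊤ : SimpleGraph β)).Connected :=
  connected_top.boxProd connected_top

lemma dist_boxProd_top_le_two (x y : α × β) :
    ((⊤ : SimpleGraph α) □ (⊤ : SimpleGraph β)).dist x y ≤ 2 := by
  classical
  have h : ((⊤ : SimpleGraph α) □ (⊤ : SimpleGraph β)).edist x y ≤ 2 := by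
    rw [edist_boxProd, edist_top, edist_top]
    split_ifs <;> norm_num
  exact ENat.toNat_le_of_le_natCast h

lemma isLocatingColoring_boxProd_top_iff [Nonempty α] [Nonempty β] :
    IsLocatingColoring ((⊤ : SimpleGraph α) □ (⊤ : SimpleGraph β)) c ↔ Surjective c ∧
      (∀ u v, ((⊤ : SimpleGraph α) □ (⊤ : SimpleGraph β)).Adj u v → c u ≠ c v) ∧
      ∀ u v, c u = c v →
        closedNbhdColors ((⊤ : SimpleGraph α) □ (⊤ : SimpleGraph β)) c u =
          closedNbhdColors ((⊤ : SimpleGraph α) □ (⊤ : SimpleGraph β)) c v → u = v :=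
  isLocatingColoring_iff_of_dist_le_two connected_boxProd_top dist_boxProd_top_le_two

lemma closedNbhdColors_boxProd_top (a : α) (b : β) :
    closedNbhdColors ((⊤ : SimpleGraph α) □ (⊤ : SimpleGraph β)) c (a, b) =
      Set.range (fun b' => c (a, b')) ∪ Set.range (fun a' => c (a', b)) := by
  ext i
  simp only [closedNbhdColors, boxProd_top_adj, Set.mem_ofPred_eq, Set.mem_union, Set.mem_range]
  constructor
  · rintro ⟨⟨a', b'⟩, hu, rfl⟩
    obtain ⟨rfl, rfl⟩ | ⟨rfl, -⟩ | ⟨rfl, -⟩ := by simpa [Prod.ext_iff, eq_comm] using hu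
    exacts [Or.inl ⟨b, rfl⟩, Or.inl ⟨b', rfl⟩, Or.inr ⟨a', rfl⟩]
  · rintro (⟨b', rfl⟩ | ⟨a', rfl⟩)
    · by_cases hb : b = b'
      · exact ⟨(a, b'), Or.inl (by rw [hb]), rfl⟩
      · exact ⟨(a, b'), Or.inr (Or.inl ⟨rfl, hb⟩), rfl⟩
    · by_cases ha : a = a'
      · exact ⟨(a', b), Or.inl (by rw [ha]), rfl⟩
      · exact ⟨(a', b), Or.inr (Or.inr ⟨rfl, ha⟩), rfl⟩

lemma injective_row
    (hc : ∀ u v, ((⊤ : SimpleGraph α) □ (⊤ : SimpleGraph β)).Adj u v → c u ≠ c v)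
    (a : α) : Injective fun b => c (a, b) :=
  fun b b' h => by_contra fun hb => hc (a, b) (a, b') (boxProd_top_adj.2 (Or.inl ⟨rfl, hb⟩)) h

lemma injective_column
    (hc : ∀ u v, ((⊤ : SimpleGraph α) □ (⊤ : SimpleGraph β)).Adj u v → c u ≠ c v)
    (b : β) : Injective fun a => c (a, b) :=
  fun a a' h => by_contra fun ha => hc (a, b) (a', b) (boxProd_top_adj.2 (Or.inr ⟨rfl, ha⟩)) h

lemma closedNbhdColors_boxProd_top_eq_univ {a a' : α} {b : β} {μ : Fin k}
    (hμ : Set.range (fun b => c (a, b)) = {μ}ᶜ) (h : c (a', b) = μ) :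
    closedNbhdColors ((⊤ : SimpleGraph α) □ (⊤ : SimpleGraph β)) c (a, b) = Set.univ := by
  rw [closedNbhdColors_boxProd_top, hμ, Set.eq_univ_iff_forall]
  intro i
  by_cases hi : i = μ
  · exact Or.inr ⟨a', h.trans hi.symm⟩
  · exact Or.inl hi

lemma closedNbhdColors_boxProd_top_eq_compl {a : α} {b : β} {μ : Fin k}
    (hμ : Set.range (fun b => c (a, b)) = {μ}ᶜ) (h : ∀ a', c (a', b) ≠ μ) :
    closedNbhdColors ((⊤ : SimpleGraph α) □ (⊤ : SimpleGraph β)) c (a, b) = {μ}ᶜ := by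
  rw [closedNbhdColors_boxProd_top, hμ]
  exact Set.union_eq_left.2 (Set.range_subset_iff.2 h)

lemma IsLocatingColoring.card_lt [Fintype α] [Fintype β] [Nonempty β]
    (hα : 1 < Fintype.card α)
    (hc : IsLocatingColoring ((⊤ : SimpleGraph α) □ (⊤ : SimpleGraph β)) c) :
    Fintype.card β < k := by
  have : Nonempty α := Fintype.card_pos_iff.1 (by omega)
  have hp := hc.2.1
  have hle : Fintype.card β ≤ k := by
    simpa using Fintype.card_le_of_injective _ (injective_row hp (Classical.arbitrary α))
  refine hle.lt_of_ne fun hk => ?_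
  have hrow (a : α) : Surjective fun b => c (a, b) :=
    ((Fintype.bijective_iff_injective_and_card _).2 ⟨injective_row hp a, by simp [hk]⟩).2
  have hcolorful (v : α × β) :
      IsColorful ((⊤ : SimpleGraph α) □ (⊤ : SimpleGraph β)) c v := by
    rw [isColorful_iff_closedNbhdColors_eq_univ, ← v.eta, closedNbhdColors_boxProd_top,
      (hrow v.1).range_eq, Set.univ_union]
  have hinj : Injective c := fun u v h =>
    hc.eq_of_isColorful connected_boxProd_top dist_boxProd_top_le_two (hcolorful u) (hcolorful v) h
  have := Fintype.card_le_of_injective _ hinj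
  simp only [Fintype.card_prod, Fintype.card_fin] at this
  nlinarith [Fintype.card_pos (α := β)]

end CompleteBoxProd

lemma Function.Injective.exists_range_eq_compl_singleton {γ δ : Type*} [Finite δ] {f : γ → δ}
    (hf : Injective f) (hcard : Nat.card δ = Nat.card γ + 1) : ∃ m, Set.range f = {m}ᶜ := by
  have : (Set.range f)ᶜ.ncard = 1 := by
    rw [Set.ncard_compl, Set.ncard_range_of_injective hf, hcard]
    omega
  obtain ⟨m, hm⟩ := Set.ncard_eq_one.1 this
  exact ⟨m, by rw [← hm, compl_compl]⟩

section FiveColorsOnFinThreeFinFour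

variable {c : Fin 3 × Fin 4 → Fin 5} {m : Fin 3 → Fin 5}

/-- If rows `a ≠ a'` both miss `μ`, then `μ` occurs only in one column `b₀`. Every other color
occurs in both rows, and its two vertices can only be told apart if one of them sees `μ`, that
is, lies in column `b₀`; so the four colors other than `μ` all occur in column `b₀` in rows
`a`, `a'`. -/
lemma IsLocatingColoring.injective_missingColor
    (hc : IsLocatingColoring ((⊤ : SimpleGraph (Fin 3)) □ (⊤ : SimpleGraph (Fin 4))) c)
    (hm : ∀ a, Set.range (fun b => c (a, b)) = {m a}ᶜ) : Injective m := by
  obtain ⟨hs, hp, hN⟩ :=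
    isLocatingColoring_boxProd_top_iff.1 hc
  have hmiss (a b) : c (a, b) ≠ m a := by
    simpa [hm a] using Set.mem_range_self (f := fun b => c (a, b)) b
  have hocc (a) {i} (hi : i ≠ m a) : ∃ b, c (a, b) = i := by
    rw [← Set.mem_range, hm a]
    exact hi
  intro a a' hmm
  by_contra haa
  obtain ⟨⟨x, b₀⟩, hx⟩ := hs (m a)
  have hcol (y b) (hy : c (y, b) = m a) : b = b₀ := by
    have hyx : y = x := by
      have hya : y ≠ a := fun h => hmiss a b (h ▸ hy)
      have hya' : y ≠ a' := by rintro rfl; exact hmiss y b (hy.trans hmm)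
      have hxa : x ≠ a := fun h => hmiss a b₀ (h ▸ hx)
      have hxa' : x ≠ a' := by rintro rfl; exact hmiss x b₀ (hx.trans hmm)
      omega
    subst hyx
    exact injective_row hp y (hy.trans hx.symm)
  have hcover : Finset.univ.erase (m a) ⊆ {c (a, b₀), c (a', b₀)} := by
    intro i hi
    rw [Finset.mem_erase] at hi
    obtain ⟨b, hb⟩ := hocc a hi.1
    obtain ⟨b', hb'⟩ := hocc a' (hmm ▸ hi.1)
    by_contra hcov
    simp only [Finset.mem_insert, Finset.mem_singleton, not_or] at hcov
    have hN₁ := closedNbhdColors_boxProd_top_eq_compl (hm a) (b := b) fun y hy =>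
      hcov.1 (hcol y b hy ▸ hb.symm)
    have hN₂ := closedNbhdColors_boxProd_top_eq_compl (hm a') (b := b') fun y hy =>
      hcov.2 (hcol y b' (hy.trans hmm.symm) ▸ hb'.symm)
    exact haa (congrArg Prod.fst (hN _ _ (hb.trans hb'.symm) (by rw [hN₁, hN₂, hmm])))
  have h4 := Finset.card_le_card hcover
  rw [Finset.card_erase_of_mem (Finset.mem_univ _), Finset.card_univ, Fintype.card_fin] at h4
  have h2 := Finset.card_le_two (a := c (a, b₀)) (b := c (a', b₀))
  omega

/-- Each ordered pair of distinct rows `(a, a')` gives a colorful vertex of row `a`: the one in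
the column where row `a'` has color `m a`. These six colorful vertices need six colors. -/
lemma IsLocatingColoring.not_injective_missingColor
    (hc : IsLocatingColoring ((⊤ : SimpleGraph (Fin 3)) □ (⊤ : SimpleGraph (Fin 4))) c)
    (hm : ∀ a, Set.range (fun b => c (a, b)) = {m a}ᶜ) : ¬ Injective m := by
  obtain ⟨-, hp, hN⟩ :=
    isLocatingColoring_boxProd_top_iff.1 hc
  intro hmi
  have hocc (a) {i} (hi : i ≠ m a) : ∃ b, c (a, b) = i := by
    rw [← Set.mem_range, hm a]
    exact hi
  choose b hb using fun p : {p : Fin 3 × Fin 3 // p.1 ≠ p.2} => hocc p.1.2 (hmi.ne p.2)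
  have hinj : Injective fun p => c (p.1.1, b p) := by
    intro p q h
    have hv := hN _ _ h (by
      rw [closedNbhdColors_boxProd_top_eq_univ (hm _) (hb p),
        closedNbhdColors_boxProd_top_eq_univ (hm _) (hb q)])
    simp only [Prod.mk.injEq] at hv
    have h₂ : p.1.2 = q.1.2 := injective_column hp (b q) <|
      show c (p.1.2, b q) = c (q.1.2, b q) by rw [← hv.2, hb p, hv.1, hv.2, hb q]
    exact Subtype.ext (Prod.ext hv.1 h₂)
  have := Fintype.card_le_of_injective _ hinj
  simp only [Fintype.card_fin] at this
  have hcard : Fintype.card {p : Fin 3 × Fin 3 // p.1 ≠ p.2} = 6 := by decide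
  omega

end FiveColorsOnFinThreeFinFour

lemma not_isLocatingColoring_fin_three_fin_four_of_fin_five (c : Fin 3 × Fin 4 → Fin 5) :
    ¬ IsLocatingColoring ((⊤ : SimpleGraph (Fin 3)) □ (⊤ : SimpleGraph (Fin 4))) c := by
  intro hc
  choose m hm using fun a => (injective_row hc.2.1 a).exists_range_eq_compl_singleton (by simp)
  exact hc.not_injective_missingColor hm (hc.injective_missingColor hm)

lemma IsLocatingColoring.six_le_of_fin_three_fin_four {k : ℕ} {c : Fin 3 × Fin 4 → Fin k}
    (hc : IsLocatingColoring ((⊤ : SimpleGraph (Fin 3)) □ (⊤ : SimpleGraph (Fin 4))) c) :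
    6 ≤ k := by
  have h4 : 4 < k := by simpa using hc.card_lt (by decide)
  by_contra! h6
  obtain rfl : k = 5 := by omega
  exact not_isLocatingColoring_fin_three_fin_four_of_fin_five c hc

def locatingColoring₃₄ : Fin 3 × Fin 4 → Fin 6 := fun v =>
  ![![2, 4, 3, 1], ![1, 2, 4, 0], ![4, 3, 0, 5]] v.1 v.2

def locatingColoring₃₅ : Fin 3 × Fin 5 → Fin 6 := fun v =>
  ![![0, 1, 2, 3, 4], ![1, 0, 3, 4, 5], ![2, 4, 5, 0, 1]] v.1 v.2

lemma isLocatingColoring_locatingColoring₃₄ :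
    IsLocatingColoring ((⊤ : SimpleGraph (Fin 3)) □ (⊤ : SimpleGraph (Fin 4)))
      locatingColoring₃₄ :=
  isLocatingColoring_boxProd_top_iff.2
    ⟨by decide, by decide, by simp only [Set.ext_iff]; decide⟩

lemma isLocatingColoring_locatingColoring₃₅ :
    IsLocatingColoring ((⊤ : SimpleGraph (Fin 3)) □ (⊤ : SimpleGraph (Fin 5)))
      locatingColoring₃₅ :=
  isLocatingColoring_boxProd_top_iff.2
    ⟨by decide, by decide, by simp only [Set.ext_iff]; decide⟩

/-- `χ_L(K_3 □ K_4) = 6` and `χ_L(K_3 □ K_5) = 6`. -/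
theorem stmt17 :
    locatingChromaticNumber
      ((⊤ : SimpleGraph (Fin 3)) □ (⊤ : SimpleGraph (Fin 4))) = 6 ∧
    locatingChromaticNumber
      ((⊤ : SimpleGraph (Fin 3)) □ (⊤ : SimpleGraph (Fin 5))) = 6 :=
  ⟨locatingChromaticNumber_eq_of_isLocatingColoring _ isLocatingColoring_locatingColoring₃₄
      fun _ _ hc => hc.six_le_of_fin_three_fin_four,
    locatingChromaticNumber_eq_of_isLocatingColoring _ isLocatingColoring_locatingColoring₃₅
      fun _ _ hc => hc.card_lt (by decide)⟩
end

section
/- For every integer n ≥ 6, the locating chromatic number of K_3 □ K_n equals n + 1. -/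
open SimpleGraph

/- ----------------- auxiliary lemmas ----------------- -/

open scoped Classical

private lemma modCases {m a b : ℕ} (ha : a < 2 * m) (hb : b < 2 * m)
    (h : a % m = b % m) : a = b ∨ a = b + m ∨ b = a + m := by
  rcases Nat.lt_or_ge a m with h1 | h1 <;> rcases Nat.lt_or_ge b m with h2 | h2
  · rw [Nat.mod_eq_of_lt h1, Nat.mod_eq_of_lt h2] at h; omega
  · rw [Nat.mod_eq_of_lt h1, Nat.mod_eq_sub_mod h2, Nat.mod_eq_of_lt (by omega)] at h; omega
  · rw [Nat.mod_eq_sub_mod h1, Nat.mod_eq_of_lt (by omega), Nat.mod_eq_of_lt h2] at h; omega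
  · rw [Nat.mod_eq_sub_mod h1, Nat.mod_eq_of_lt (by omega),
      Nat.mod_eq_sub_mod h2, Nat.mod_eq_of_lt (by omega)] at h; omega

private lemma modEq_of {m a b : ℕ} (h : a = b ∨ a = b + m ∨ b = a + m) :
    a % m = b % m := by
  rcases h with rfl | rfl | rfl
  · rfl
  · exact Nat.add_mod_right b m
  · exact (Nat.add_mod_right a m).symm

private abbrev KG (n : ℕ) : SimpleGraph (Fin 3 × Fin n) :=
  (⊤ : SimpleGraph (Fin 3)) □ (⊤ : SimpleGraph (Fin n))

private lemma kg_adj {n : ℕ} {u v : Fin 3 × Fin n} :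
    (KG n).Adj u v ↔ (u.1 ≠ v.1 ∧ u.2 = v.2) ∨ (u.2 ≠ v.2 ∧ u.1 = v.1) := by
  simp [SimpleGraph.boxProd_adj]

private lemma kg_walk {n : ℕ} (u v : Fin 3 × Fin n) :
    ∃ w : (KG n).Walk u v, w.length ≤ 2 := by
  by_cases h1 : u.1 = v.1
  · by_cases h2 : u.2 = v.2
    · have : u = v := Prod.ext h1 h2
      subst this; exact ⟨SimpleGraph.Walk.nil, by simp⟩
    · exact ⟨SimpleGraph.Walk.cons (kg_adj.mpr (Or.inr ⟨h2, h1⟩)) SimpleGraph.Walk.nil,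
        by simp⟩
  · by_cases h2 : u.2 = v.2
    · exact ⟨SimpleGraph.Walk.cons (kg_adj.mpr (Or.inl ⟨h1, h2⟩)) SimpleGraph.Walk.nil,
        by simp⟩
    · refine ⟨SimpleGraph.Walk.cons (v := (u.1, v.2)) (kg_adj.mpr (Or.inr ⟨h2, rfl⟩))
        (SimpleGraph.Walk.cons (kg_adj.mpr (Or.inl ⟨h1, rfl⟩)) SimpleGraph.Walk.nil), by simp⟩

private lemma kg_reach {n : ℕ} (u v : Fin 3 × Fin n) : (KG n).Reachable u v :=
  ⟨(kg_walk u v).choose⟩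

private lemma kg_dist_le {n : ℕ} (u v : Fin 3 × Fin n) : (KG n).dist u v ≤ 2 := by
  obtain ⟨w, hw⟩ := kg_walk u v
  exact le_trans (SimpleGraph.dist_le w) hw

private lemma setDist_of_mem {V : Type*} (G : SimpleGraph V) {v : V} {S : Set V}
    (h : v ∈ S) : setDist G v S = 0 := by
  apply Nat.sInf_eq_zero.mpr
  exact Or.inl ⟨v, h, SimpleGraph.dist_self⟩

private lemma kg_code {n k : ℕ} (c : Fin 3 × Fin n → Fin k)
    (hs : Function.Surjective c) (v : Fin 3 × Fin n) (i : Fin k) :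
    colorCode (KG n) c v i =
      if c v = i then 0 else if ∃ u, (KG n).Adj v u ∧ c u = i then 1 else 2 := by
  unfold colorCode setDist
  split_ifs with h1 h2
  · exact Nat.sInf_eq_zero.mpr (Or.inl ⟨v, h1, SimpleGraph.dist_self⟩)
  · obtain ⟨u, hadj, hcu⟩ := h2
    have hle : sInf ((KG n).dist v '' (c ⁻¹' {i})) ≤ 1 :=
      Nat.sInf_le ⟨u, hcu, SimpleGraph.dist_eq_one_iff_adj.mpr hadj⟩
    have h0 : sInf ((KG n).dist v '' (c ⁻¹' {i})) ≠ 0 := by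
      intro e
      rcases Nat.sInf_eq_zero.mp e with ⟨w, hw, hdw⟩ | hemp
      · have := (kg_reach v w).dist_eq_zero_iff.mp hdw
        exact h1 (this ▸ hw)
      · obtain ⟨u', hu'⟩ := hs i
        exact absurd hemp (Set.nonempty_iff_ne_empty.mp ⟨_, ⟨u', hu', rfl⟩⟩)
    omega
  · obtain ⟨u, hu⟩ := hs i
    have hmem : (KG n).dist v u ∈ (KG n).dist v '' (c ⁻¹' {i}) := ⟨u, hu, rfl⟩
    have hle : sInf ((KG n).dist v '' (c ⁻¹' {i})) ≤ 2 :=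
      le_trans (Nat.sInf_le hmem) (kg_dist_le v u)
    obtain ⟨w, hw, hdw⟩ := Nat.sInf_mem (Set.nonempty_of_mem hmem)
    have h0 : sInf ((KG n).dist v '' (c ⁻¹' {i})) ≠ 0 := by
      intro e
      rw [e] at hdw
      have := (kg_reach v w).dist_eq_zero_iff.mp hdw
      exact h1 (this ▸ hw)
    have hne1 : sInf ((KG n).dist v '' (c ⁻¹' {i})) ≠ 1 := by
      intro e
      rw [e] at hdw
      exact h2 ⟨w, SimpleGraph.dist_eq_one_iff_adj.mp hdw, hw⟩
    omega

private lemma lowerBound (n : ℕ) (hn : 6 ≤ n) {k : ℕ} (c : Fin 3 × Fin n → Fin k)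
    (hc : IsLocatingColoring (KG n) c) : n + 1 ≤ k := by
  obtain ⟨hs, hp, hinj⟩ := hc
  by_contra hk
  push_neg at hk
  have hrow : ∀ r : Fin 3, Function.Injective (fun j : Fin n => c (r, j)) := by
    intro r j j' h
    by_contra hne
    exact hp (r, j) (r, j') (kg_adj.mpr (Or.inr ⟨hne, rfl⟩)) h
  have hkn : n ≤ k := by
    simpa using Fintype.card_le_of_injective _ (hrow ⟨0, by omega⟩)
  obtain rfl : n = k := by omega
  have hsur : ∀ r : Fin 3, Function.Surjective (fun j : Fin n => c (r, j)) :=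
    fun r => Finite.injective_iff_surjective.mp (hrow r)
  have hcode : ∀ (v : Fin 3 × Fin n) (i : Fin n),
      colorCode (KG n) c v i = if c v = i then 0 else 1 := by
    intro v i
    rw [kg_code c hs]
    split_ifs with h1 h2
    · rfl
    · rfl
    · exfalso
      apply h2
      obtain ⟨j, hj⟩ := hsur v.1 i
      have hne : v.2 ≠ j := by
        intro he
        apply h1
        have hv : v = (v.1, j) := by rw [← he]
        rw [hv]; exact hj
      exact ⟨(v.1, j), kg_adj.mpr (Or.inr ⟨hne, rfl⟩), hj⟩
  obtain ⟨j, hj⟩ := hsur ⟨1, by omega⟩ (c ((⟨0, by omega⟩ : Fin 3), (⟨0, by omega⟩ : Fin n)))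
  have hj' : c ((⟨1, by omega⟩ : Fin 3), j) = c ((⟨0, by omega⟩ : Fin 3), (⟨0, by omega⟩ : Fin n)) := hj
  have heq : colorCode (KG n) c ((⟨0, by omega⟩ : Fin 3), (⟨0, by omega⟩ : Fin n))
      = colorCode (KG n) c ((⟨1, by omega⟩ : Fin 3), j) := by
    funext i
    rw [hcode, hcode, hj']
  have h01 := hinj heq
  have h02 := congrArg (fun p : Fin 3 × Fin n => (p.1).val) h01
  simp at h02

private lemma upperBound (n : ℕ) (hn : 6 ≤ n) :
    ∃ c : Fin 3 × Fin n → Fin (n + 1), IsLocatingColoring (KG n) c := by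
  set c : Fin 3 × Fin n → Fin (n + 1) :=
    fun p => ⟨(p.1.val + p.2.val) % (n + 1), Nat.mod_lt _ (by omega)⟩ with hcdef
  have hval : ∀ p : Fin 3 × Fin n, (c p).val = (p.1.val + p.2.val) % (n + 1) :=
    fun p => rfl
  have hsurj : Function.Surjective c := by
    intro i
    rcases Nat.lt_or_ge i.val n with h | h
    · refine ⟨(⟨0, by omega⟩, ⟨i.val, h⟩), Fin.ext ?_⟩
      show (0 + i.val) % (n + 1) = i.val
      rw [Nat.zero_add, Nat.mod_eq_of_lt (by omega)]
    · refine ⟨(⟨1, by omega⟩, ⟨n - 1, by omega⟩), Fin.ext ?_⟩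
      show (1 + (n - 1)) % (n + 1) = i.val
      have hi : i.val = n := by have := i.isLt; omega
      have h1 : 1 + (n - 1) = n := by omega
      rw [h1, Nat.mod_eq_of_lt (by omega), hi]
  have hprop : ∀ u v, (KG n).Adj u v → c u ≠ c v := by
    intro u v hadj heq
    have hv := congrArg Fin.val heq
    rw [hval, hval] at hv
    have hu1 := u.1.isLt; have hu2 := u.2.isLt
    have hv1 := v.1.isLt; have hv2 := v.2.isLt
    have hcs := modCases (by omega) (by omega) hv
    rcases kg_adj.mp hadj with ⟨hne, he⟩ | ⟨hne, he⟩
    · have h1 : u.1.val ≠ v.1.val := fun e => hne (Fin.ext e)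
      have h2 : u.2.val = v.2.val := congrArg Fin.val he
      omega
    · have h1 : u.2.val ≠ v.2.val := fun e => hne (Fin.ext e)
      have h2 : u.1.val = v.1.val := congrArg Fin.val he
      omega
  have hcode := kg_code c hsurj
  -- every vertex misses the "row-missing" color of its own row
  have claimA : ∀ (p : Fin 3 × Fin n) (mv : Fin (n + 1)),
      mv.val = (n + p.1.val) % (n + 1) → c p ≠ mv := by
    intro p mv hmv heq
    have hv := congrArg Fin.val heq
    rw [hval, hmv] at hv
    have h1 := p.1.isLt; have h2 := p.2.isLt
    have := modCases (m := n + 1) (by omega) (by omega) hv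
    omega
  have claimB : ∀ r1 r2 : ℕ, r1 < 3 → r2 < 3 → r1 ≠ r2 →
      ∃ jv : ℕ, jv < n ∧ (r2 + jv) % (n + 1) = (n + r1) % (n + 1) := by
    intro r1 r2 h1 h2 hne
    rcases Nat.lt_or_ge r1 r2 with hlt | hge
    · exact ⟨n + r1 - r2, by omega, modEq_of (Or.inl (by omega))⟩
    · exact ⟨r1 - r2 - 1, by omega, modEq_of (Or.inr (Or.inr (by omega)))⟩
  refine ⟨c, hsurj, hprop, ?_⟩
  intro u v h
  -- same color
  have hcc : c v = c u := by
    have h0 := congrFun h (c u)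
    rw [hcode u (c u), hcode v (c u), if_pos rfl] at h0
    by_contra hne
    rw [if_neg hne] at h0
    split_ifs at h0
  have hcval : (u.1.val + u.2.val) % (n + 1) = (v.1.val + v.2.val) % (n + 1) := by
    have := congrArg Fin.val hcc
    rw [hval, hval] at this
    exact this.symm
  have hu1 := u.1.isLt; have hu2 := u.2.isLt
  have hv1 := v.1.isLt; have hv2 := v.2.isLt
  by_cases hrr : u.1 = v.1
  · -- same row: columns equal
    have h1 : u.1.val = v.1.val := congrArg Fin.val hrr
    have := modCases (m := n + 1) (by omega) (by omega) hcval
    have h2 : u.2.val = v.2.val := by omega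
    exact Prod.ext hrr (Fin.ext h2)
  · exfalso
    have hrrv : u.1.val ≠ v.1.val := fun e => hrr (Fin.ext e)
    -- the missing colors of the two rows
    set mu : Fin (n + 1) := ⟨(n + u.1.val) % (n + 1), Nat.mod_lt _ (by omega)⟩ with hmu
    set mv : Fin (n + 1) := ⟨(n + v.1.val) % (n + 1), Nat.mod_lt _ (by omega)⟩ with hmv
    -- mu appears in row v.1  (adjacent to v), so colorCode v mu = 1
    obtain ⟨jv, hjvlt, hjveq⟩ := claimB u.1.val v.1.val hu1 hv1 hrrv
    have hwit : c (v.1, ⟨jv, hjvlt⟩) = mu := Fin.ext (by rw [hval]; exact hjveq)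
    have hmune : c v ≠ mu := by rw [hcc]; exact claimA u mu rfl
    have hmune2 : c u ≠ mu := claimA u mu rfl
    have hjne : v.2 ≠ (⟨jv, hjvlt⟩ : Fin n) := by
      intro he
      apply hmune
      have : v = (v.1, (⟨jv, hjvlt⟩ : Fin n)) := by rw [← he]
      rw [this]; exact hwit
    have hcodev : colorCode (KG n) c v mu = 1 := by
      rw [hcode v mu, if_neg hmune, if_pos]
      exact ⟨(v.1, ⟨jv, hjvlt⟩), kg_adj.mpr (Or.inr ⟨hjne, rfl⟩), hwit⟩
    -- hence colorCode u mu = 1, giving a neighbor of u in its column colored mu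
    have hcodeu : colorCode (KG n) c u mu = 1 := by rw [congrFun h mu]; exact hcodev
    rw [hcode u mu, if_neg hmune2] at hcodeu
    have hexu : ∃ w, (KG n).Adj u w ∧ c w = mu := by
      by_contra hno
      rw [if_neg hno] at hcodeu; omega
    obtain ⟨w, hadj, hcw⟩ := hexu
    have hwcol : ∃ s : ℕ, s < 3 ∧ s ≠ u.1.val ∧
        (s + u.2.val) % (n + 1) = (n + u.1.val) % (n + 1) := by
      rcases kg_adj.mp hadj with ⟨hne, he⟩ | ⟨hne, he⟩
      · refine ⟨w.1.val, w.1.isLt, fun e => hne (Fin.ext e.symm), ?_⟩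
        have hthis := congrArg Fin.val hcw
        rw [hval] at hthis
        have hsnd : u.2.val = w.2.val := congrArg Fin.val he
        rw [hsnd]
        exact hthis
      · exact absurd hcw (claimA w mu (by rw [hmu, ← he]))
    -- symmetric: mv appears in row u.1, so colorCode u mv = 1
    obtain ⟨ju, hjult, hjueq⟩ := claimB v.1.val u.1.val hv1 hu1 (Ne.symm hrrv)
    have hwit' : c (u.1, ⟨ju, hjult⟩) = mv := Fin.ext (by rw [hval]; exact hjueq)
    have hmvne : c u ≠ mv := by rw [← hcc]; exact claimA v mv rfl
    have hmvne2 : c v ≠ mv := claimA v mv rfl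
    have hjne' : u.2 ≠ (⟨ju, hjult⟩ : Fin n) := by
      intro he
      apply hmvne
      have : u = (u.1, (⟨ju, hjult⟩ : Fin n)) := by rw [← he]
      rw [this]; exact hwit'
    have hcodeu' : colorCode (KG n) c u mv = 1 := by
      rw [hcode u mv, if_neg hmvne, if_pos]
      exact ⟨(u.1, ⟨ju, hjult⟩), kg_adj.mpr (Or.inr ⟨hjne', rfl⟩), hwit'⟩
    have hcodev' : colorCode (KG n) c v mv = 1 := by rw [← congrFun h mv]; exact hcodeu'
    rw [hcode v mv, if_neg hmvne2] at hcodev'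
    have hexv : ∃ w, (KG n).Adj v w ∧ c w = mv := by
      by_contra hno
      rw [if_neg hno] at hcodev'; omega
    obtain ⟨w', hadj', hcw'⟩ := hexv
    have hwcol' : ∃ t : ℕ, t < 3 ∧ t ≠ v.1.val ∧
        (t + v.2.val) % (n + 1) = (n + v.1.val) % (n + 1) := by
      rcases kg_adj.mp hadj' with ⟨hne, he⟩ | ⟨hne, he⟩
      · refine ⟨w'.1.val, w'.1.isLt, fun e => hne (Fin.ext e.symm), ?_⟩
        have hthis := congrArg Fin.val hcw'
        rw [hval] at hthis
        have hsnd : v.2.val = w'.2.val := congrArg Fin.val he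
        rw [hsnd]
        exact hthis
      · exact absurd hcw' (claimA w' mv (by rw [hmv, ← he]))
    obtain ⟨s, hs3, hsne, hseq⟩ := hwcol
    obtain ⟨t, ht3, htne, hteq⟩ := hwcol'
    have c1 := modCases (m := n + 1) (by omega) (by omega) hcval
    have c2 := modCases (m := n + 1) (by omega) (by omega) hseq
    have c3 := modCases (m := n + 1) (by omega) (by omega) hteq
    rcases c1 with c1 | c1 | c1 <;> rcases c2 with c2 | c2 | c2 <;>
      rcases c3 with c3 | c3 | c3 <;> omega

/-- For every `n ≥ 6`, `χ_L(K_3 □ K_n) = n + 1`. -/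
theorem stmt18 (n : ℕ) (hn : 6 ≤ n) :
    locatingChromaticNumber
      ((⊤ : SimpleGraph (Fin 3)) □ (⊤ : SimpleGraph (Fin n))) = n + 1 := by
  have hmem : (n + 1) ∈ {k : ℕ | ∃ c : Fin 3 × Fin n → Fin k,
      IsLocatingColoring ((⊤ : SimpleGraph (Fin 3)) □ (⊤ : SimpleGraph (Fin n))) c} :=
    upperBound n hn
  refine le_antisymm (Nat.sInf_le hmem) (le_csInf ⟨_, hmem⟩ ?_)
  rintro k ⟨c, hc⟩
  exact lowerBound n hn c hc
end
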